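/- Let u : ℝ × ℝ → ℝ be smooth. For each t ∈ ℝ define the Schrödinger operator L(t) by (L(t) f)(x) = −f″(x) + u(x,t) f(x), and define (A(t) f)(x) = 4 f‴(x) − 6 u(x,t) f′(x) − 3 (∂u/∂x)(x,t) f(x). Then the Lax equation holds — i.e., for every smooth f : ℝ → ℝ and all (x,t), ∂/∂t [(L(t) f)(x)] = (L(t)(A(t) f))(x) − (A(t)(L(t) f))(x) — if and only if u satisfies ∂u/∂t = 6 u ∂u/∂x − ∂³u/∂x³ at every point (x,t). -/

import Mathlib

/-- The time-dependent Schrödinger operator `L(t) = −(d/dx)² + u(·,t)`. -/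
noncomputable def schrodingerOpT (u : ℝ × ℝ → ℝ) (t : ℝ) (f : ℝ → ℝ) : ℝ → ℝ :=
  fun x => -iteratedDeriv 2 f x + u (x, t) * f x

/-- The time-dependent Lax operator `A(t) = 4(d/dx)³ − 6u(·,t)(d/dx) − 3u_x(·,t)`. -/
noncomputable def laxOpT (u : ℝ × ℝ → ℝ) (t : ℝ) (f : ℝ → ℝ) : ℝ → ℝ :=
  fun x => 4 * iteratedDeriv 3 f x - 6 * u (x, t) * deriv f x
    - 3 * deriv (fun y => u (y, t)) x * f x

private lemma smoothD {g : ℝ → ℝ} (hg : ContDiff ℝ (⊤ : ℕ∞) g) : ContDiff ℝ (⊤ : ℕ∞) (deriv g) := by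
  rw [show (((⊤ : ℕ∞) : WithTop ℕ∞)) = ((⊤ : ℕ∞) : WithTop ℕ∞) + 1 from rfl] at hg
  exact (contDiff_succ_iff_deriv.mp hg).2.2

private lemma comm_lemma (v f : ℝ → ℝ) (hv : ContDiff ℝ (⊤ : ℕ∞) v) (hf : ContDiff ℝ (⊤ : ℕ∞) f) (x : ℝ) :
    (-iteratedDeriv 2 (fun y => 4 * iteratedDeriv 3 f y - 6 * v y * deriv f y
        - 3 * deriv v y * f y) x
      + v x * (4 * iteratedDeriv 3 f x - 6 * v x * deriv f x - 3 * deriv v x * f x))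
    - (4 * iteratedDeriv 3 (fun y => -iteratedDeriv 2 f y + v y * f y) x
        - 6 * v x * deriv (fun y => -iteratedDeriv 2 f y + v y * f y) x
        - 3 * deriv v x * (-iteratedDeriv 2 f x + v x * f x))
    = (6 * v x * deriv v x - iteratedDeriv 3 v x) * f x := by
  have hf1 := smoothD hf
  have hf2 := smoothD hf1
  have hf3 := smoothD hf2
  have hf4 := smoothD hf3
  have hv1 := smoothD hv
  have hv2 := smoothD hv1
  simp only [iteratedDeriv_succ, iteratedDeriv_zero]
  set f1 := deriv f with hf1d
  set f2 := deriv f1 with hf2d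
  set f3 := deriv f2 with hf3d
  set f4 := deriv f3 with hf4d
  set f5 := deriv f4 with hf5d
  set v1 := deriv v with hv1d
  set v2 := deriv v1 with hv2d
  set v3 := deriv v2 with hv3d
  have Hf : ∀ y, HasDerivAt f (f1 y) y := fun y => (hf.differentiable (by simp) y).hasDerivAt
  have Hf1 : ∀ y, HasDerivAt f1 (f2 y) y := fun y => (hf1.differentiable (by simp) y).hasDerivAt
  have Hf2 : ∀ y, HasDerivAt f2 (f3 y) y := fun y => (hf2.differentiable (by simp) y).hasDerivAt
  have Hf3 : ∀ y, HasDerivAt f3 (f4 y) y := fun y => (hf3.differentiable (by simp) y).hasDerivAt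
  have Hf4 : ∀ y, HasDerivAt f4 (f5 y) y := fun y => (hf4.differentiable (by simp) y).hasDerivAt
  have Hv : ∀ y, HasDerivAt v (v1 y) y := fun y => (hv.differentiable (by simp) y).hasDerivAt
  have Hv1 : ∀ y, HasDerivAt v1 (v2 y) y := fun y => (hv1.differentiable (by simp) y).hasDerivAt
  have Hv2 : ∀ y, HasDerivAt v2 (v3 y) y := fun y => (hv2.differentiable (by simp) y).hasDerivAt
  -- the A part
  have HA : ∀ y, HasDerivAt (fun y => 4 * f3 y - 6 * v y * f1 y - 3 * v1 y * f y)
      (4 * f4 y - (6 * v1 y * f1 y + 6 * v y * f2 y) - (3 * v2 y * f y + 3 * v1 y * f1 y)) y :=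
    fun y => (((Hf3 y).const_mul 4).sub (((Hv y).const_mul 6).mul (Hf1 y))).sub
      (((Hv1 y).const_mul 3).mul (Hf y))
  have hdA : deriv (fun y => 4 * f3 y - 6 * v y * f1 y - 3 * v1 y * f y)
      = fun y => 4 * f4 y - (6 * v1 y * f1 y + 6 * v y * f2 y)
          - (3 * v2 y * f y + 3 * v1 y * f1 y) :=
    funext fun y => (HA y).deriv
  have HA2 : ∀ y, HasDerivAt (fun y => 4 * f4 y - (6 * v1 y * f1 y + 6 * v y * f2 y)
        - (3 * v2 y * f y + 3 * v1 y * f1 y))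
      (4 * f5 y - ((6 * v2 y * f1 y + 6 * v1 y * f2 y) + (6 * v1 y * f2 y + 6 * v y * f3 y))
        - ((3 * v3 y * f y + 3 * v2 y * f1 y) + (3 * v2 y * f1 y + 3 * v1 y * f2 y))) y :=
    fun y => (((Hf4 y).const_mul 4).sub
        ((((Hv1 y).const_mul 6).mul (Hf1 y)).add (((Hv y).const_mul 6).mul (Hf2 y)))).sub
      ((((Hv2 y).const_mul 3).mul (Hf y)).add (((Hv1 y).const_mul 3).mul (Hf1 y)))
  have hA2x : deriv (deriv (fun y => 4 * f3 y - 6 * v y * f1 y - 3 * v1 y * f y)) x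
      = 4 * f5 x - ((6 * v2 x * f1 x + 6 * v1 x * f2 x) + (6 * v1 x * f2 x + 6 * v x * f3 x))
        - ((3 * v3 x * f x + 3 * v2 x * f1 x) + (3 * v2 x * f1 x + 3 * v1 x * f2 x)) := by
    rw [hdA]; exact (HA2 x).deriv
  -- the L part
  have HL : ∀ y, HasDerivAt (fun y => -f2 y + v y * f y)
      (-f3 y + (v1 y * f y + v y * f1 y)) y :=
    fun y => ((Hf2 y).neg).add ((Hv y).mul (Hf y))
  have hdL : deriv (fun y => -f2 y + v y * f y)
      = fun y => -f3 y + (v1 y * f y + v y * f1 y) := funext fun y => (HL y).deriv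
  have HL1 : ∀ y, HasDerivAt (fun y => -f3 y + (v1 y * f y + v y * f1 y))
      (-f4 y + ((v2 y * f y + v1 y * f1 y) + (v1 y * f1 y + v y * f2 y))) y :=
    fun y => ((Hf3 y).neg).add (((Hv1 y).mul (Hf y)).add ((Hv y).mul (Hf1 y)))
  have hdL1 : deriv (fun y => -f3 y + (v1 y * f y + v y * f1 y))
      = fun y => -f4 y + ((v2 y * f y + v1 y * f1 y) + (v1 y * f1 y + v y * f2 y)) :=
    funext fun y => (HL1 y).deriv
  have HL2 : ∀ y, HasDerivAt
      (fun y => -f4 y + ((v2 y * f y + v1 y * f1 y) + (v1 y * f1 y + v y * f2 y)))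
      (-f5 y + (((v3 y * f y + v2 y * f1 y) + (v2 y * f1 y + v1 y * f2 y))
        + ((v2 y * f1 y + v1 y * f2 y) + (v1 y * f2 y + v y * f3 y)))) y :=
    fun y => ((Hf4 y).neg).add
      (((((Hv2 y).mul (Hf y)).add (((Hv1 y).mul (Hf1 y))))).add
        ((((Hv1 y).mul (Hf1 y))).add ((Hv y).mul (Hf2 y))))
  have hL3x : deriv (deriv (deriv (fun y => -f2 y + v y * f y))) x
      = -f5 x + (((v3 x * f x + v2 x * f1 x) + (v2 x * f1 x + v1 x * f2 x))
        + ((v2 x * f1 x + v1 x * f2 x) + (v1 x * f2 x + v x * f3 x))) := by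
    rw [hdL, hdL1]; exact (HL2 x).deriv
  have hL1x : deriv (fun y => -f2 y + v y * f y) x
      = -f3 x + (v1 x * f x + v x * f1 x) := (HL x).deriv
  rw [hA2x, hL3x, hL1x]
  ring

/-- For smooth `u : ℝ × ℝ → ℝ`, the Lax equation
`∂/∂t (L(t)f) = [L(t), A(t)] f` holds for every smooth test function `f` and all `(x,t)`
if and only if `u` satisfies `∂u/∂t = 6 u ∂u/∂x − ∂³u/∂x³` everywhere. -/
theorem lax_equation_iff_kdv (u : ℝ × ℝ → ℝ) (hu : ContDiff ℝ (⊤ : ℕ∞) u) :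
    (∀ f : ℝ → ℝ, ContDiff ℝ (⊤ : ℕ∞) f → ∀ x t : ℝ,
        deriv (fun s => schrodingerOpT u s f x) t
          = schrodingerOpT u t (laxOpT u t f) x - laxOpT u t (schrodingerOpT u t f) x)
      ↔
    (∀ x t : ℝ,
        deriv (fun s => u (x, s)) t
          = 6 * u (x, t) * deriv (fun y => u (y, t)) x
            - iteratedDeriv 3 (fun y => u (y, t)) x) := by
  have hvs : ∀ t : ℝ, ContDiff ℝ (⊤ : ℕ∞) (fun y => u (y, t)) := fun t =>
    hu.comp (contDiff_id.prodMk contDiff_const)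
  have key : ∀ f : ℝ → ℝ, ContDiff ℝ (⊤ : ℕ∞) f → ∀ x t : ℝ,
      schrodingerOpT u t (laxOpT u t f) x - laxOpT u t (schrodingerOpT u t f) x
        = (6 * u (x, t) * deriv (fun y => u (y, t)) x
            - iteratedDeriv 3 (fun y => u (y, t)) x) * f x := by
    intro f hf x t
    exact comm_lemma (fun y => u (y, t)) f (hvs t) hf x
  have tderiv : ∀ (f : ℝ → ℝ) (x t : ℝ), deriv (fun s => schrodingerOpT u s f x) t
      = deriv (fun s => u (x, s)) t * f x := by
    intro f x t
    have h2 : HasDerivAt (fun s => u (x, s)) (deriv (fun s => u (x, s)) t) t :=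
      (((hu.comp (contDiff_const.prodMk contDiff_id)).differentiable (by simp)) t).hasDerivAt
    exact ((h2.mul_const (f x)).const_add (-iteratedDeriv 2 f x)).deriv
  constructor
  · intro h x t
    have h1 := h (fun _ => 1) contDiff_const x t
    rw [tderiv, key _ contDiff_const] at h1
    simpa using h1
  · intro h f hf x t
    rw [tderiv, key f hf, h x t]
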